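/- Let (a_n)_{n≥1} be an increasing sequence of positive integers with a_n | a_{n+1} and ρ := Σ_{n=1}^{∞} 1/a_n ≤ 1/4. Define sets A_n ⊆ ℕ (for n ∈ ℕ, including 0) recursively: A_0 = {k·a_1 : k ∈ ℕ}; for n > 0, if n ∈ A_m for some m < n then A_n := A_m, and otherwise A_n := {n + k·a_{n+1} : k ∈ ℕ}. Call n an initial if n = min A_n. Then for every N ≥ 1, the number of k ∈ {1, …, N} that are not initials is strictly less than N·ρ. -/

import Mathlib

/-!
A non-initial `k` lies in the progression `A k`, which starts at its initial `i = min A k < k`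
with step `a (i + 1)`. So at most `N / a (i + 1)` non-initials in `{1, …, N}` share the initial
`i`, and summing over `i < N` bounds their number by `N · ∑_{i < N} 1 / a (i + 1) < N · ρ`.
Divisibility makes `a` grow at least geometrically, so the series defining `ρ` converges
(otherwise `tsum` would be the junk value `0`).
-/

open Finset

def arithProg (i d : ℕ) : Set ℕ := {j | ∃ k : ℕ, j = i + k * d}

lemma self_mem_arithProg (i d : ℕ) : i ∈ arithProg i d := ⟨0, by simp⟩

lemma sInf_arithProg (i d : ℕ) : sInf (arithProg i d) = i :=
  IsLeast.csInf_eq ⟨self_mem_arithProg i d, fun _ ⟨_, hk⟩ => hk ▸ Nat.le_add_right _ _⟩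

lemma mem_self_and_exists_eq_arithProg (a : ℕ → ℕ) (A : ℕ → Set ℕ)
    (hA0 : A 0 = {j | ∃ k : ℕ, j = k * a 1})
    (hAeq : ∀ n : ℕ, 0 < n → ∀ m : ℕ, m < n → n ∈ A m → A n = A m)
    (hAnew : ∀ n : ℕ, 0 < n → (∀ m : ℕ, m < n → n ∉ A m) →
      A n = {j | ∃ k : ℕ, j = n + k * a (n + 1)}) (n : ℕ) :
    n ∈ A n ∧ ∃ i, A n = arithProg i (a (i + 1)) := by
  induction n using Nat.strong_induction_on with
  | _ n ih =>
    rcases Nat.eq_zero_or_pos n with rfl | hn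
    · have h0 : A 0 = arithProg 0 (a (0 + 1)) := by simp [hA0, arithProg]
      exact ⟨h0 ▸ self_mem_arithProg _ _, 0, h0⟩
    by_cases hold : ∃ m < n, n ∈ A m
    · obtain ⟨m, hmn, hnm⟩ := hold
      rw [hAeq n hn m hmn hnm]
      exact ⟨hnm, (ih m hmn).2⟩
    · push Not at hold
      have hnew : A n = arithProg n (a (n + 1)) := hAnew n hn hold
      exact ⟨hnew ▸ self_mem_arithProg _ _, n, hnew⟩

lemma exists_eq_sInf_add_mul (a : ℕ → ℕ) (A : ℕ → Set ℕ)
    (hA0 : A 0 = {j | ∃ k : ℕ, j = k * a 1})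
    (hAeq : ∀ n : ℕ, 0 < n → ∀ m : ℕ, m < n → n ∈ A m → A n = A m)
    (hAnew : ∀ n : ℕ, 0 < n → (∀ m : ℕ, m < n → n ∉ A m) →
      A n = {j | ∃ k : ℕ, j = n + k * a (n + 1)}) (n : ℕ) :
    ∃ m, n = sInf (A n) + m * a (sInf (A n) + 1) := by
  obtain ⟨hmem, i, hi⟩ := mem_self_and_exists_eq_arithProg a A hA0 hAeq hAnew n
  rw [hi, sInf_arithProg]
  rwa [hi] at hmem

lemma filter_ne_filter_eq_subset_image {f d : ℕ → ℕ}
    (hf : ∀ k, ∃ m, k = f k + m * d (f k)) (N i : ℕ) :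
    ((Icc 1 N).filter (fun k => k ≠ f k)).filter (fun k => f k = i) ⊆
      (Icc 1 (N / d i)).image (fun m => i + m * d i) := by
  intro k hk
  simp only [mem_filter, mem_Icc] at hk
  obtain ⟨⟨⟨-, hkN⟩, hne⟩, rfl⟩ := hk
  obtain ⟨m, hm⟩ := hf k
  have hmd : m * d (f k) ≠ 0 := by omega
  have hd : 0 < d (f k) := Nat.pos_of_ne_zero (right_ne_zero_of_mul hmd)
  have hm0 : 0 < m := Nat.pos_of_ne_zero (left_ne_zero_of_mul hmd)
  exact mem_image.2 ⟨m, mem_Icc.2 ⟨hm0, (Nat.le_div_iff_mul_le hd).2 (by omega)⟩, hm.symm⟩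

lemma card_filter_ne_le_sum {f d : ℕ → ℕ} (hf : ∀ k, ∃ m, k = f k + m * d (f k)) (N : ℕ) :
    (((Icc 1 N).filter (fun k => k ≠ f k)).card : ℝ) ≤
      ∑ i ∈ range N, (N : ℝ) / d i := by
  have hmaps : ∀ k ∈ (Icc 1 N).filter (fun k => k ≠ f k), f k ∈ range N := by
    intro k hk
    simp only [mem_filter, mem_Icc] at hk
    obtain ⟨m, hm⟩ := hf k
    exact mem_range.2 (by omega)
  rw [card_eq_sum_card_fiberwise hmaps, Nat.cast_sum]
  refine sum_le_sum fun i _ => ?_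
  calc _ ≤ (((Icc 1 (N / d i)).image (fun m => i + m * d i)).card : ℝ) :=
        mod_cast card_le_card (filter_ne_filter_eq_subset_image hf N i)
    _ ≤ ((N / d i : ℕ) : ℝ) := by
        exact_mod_cast card_image_le.trans (by rw [Nat.card_Icc, Nat.add_sub_cancel])
    _ ≤ (N : ℝ) / d i := Nat.cast_div_le

lemma two_mul_le_of_dvd_of_lt {m n : ℕ} (hm : 0 < m) (hdvd : m ∣ n) (hlt : m < n) :
    2 * m ≤ n := by
  obtain ⟨c, rfl⟩ := hdvd
  have : 1 < c := by
    by_contra! hc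
    interval_cases c <;> omega
  nlinarith

lemma two_pow_le_of_dvd_of_lt {b : ℕ → ℕ} (h0 : 0 < b 0) (hdvd : ∀ n, b n ∣ b (n + 1))
    (hlt : ∀ n, b n < b (n + 1)) (n : ℕ) : 2 ^ n ≤ b n := by
  induction n with
  | zero => exact h0
  | succ n ih =>
    calc 2 ^ (n + 1) = 2 * 2 ^ n := by ring
      _ ≤ 2 * b n := by omega
      _ ≤ b (n + 1) :=
        two_mul_le_of_dvd_of_lt ((by positivity : 0 < 2 ^ n).trans_le ih) (hdvd n) (hlt n)

lemma summable_one_div_of_two_pow_le {b : ℕ → ℕ} (hb : ∀ n, 2 ^ n ≤ b n) :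
    Summable fun n => (1 : ℝ) / b n := by
  refine (summable_geometric_two).of_nonneg_of_le (fun n => by positivity) fun n => ?_
  rw [one_div_pow]
  exact one_div_le_one_div_of_le (by positivity) (mod_cast hb n)

lemma sum_range_lt_tsum_of_pos {f : ℕ → ℝ} (hf : Summable f) (hpos : ∀ n, 0 < f n)
    (N : ℕ) :
    ∑ i ∈ range N, f i < ∑' n, f n :=
  calc ∑ i ∈ range N, f i < ∑ i ∈ range (N + 1), f i := by
        rw [sum_range_succ]; linarith [hpos N]
    _ ≤ ∑' n, f n := hf.sum_le_tsum _ fun i _ => (hpos i).le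

theorem count_non_initials_lt_general
    (a : ℕ → ℕ)
    (hpos : ∀ n : ℕ, 1 ≤ n → 0 < a n)
    (hmono : ∀ n : ℕ, 1 ≤ n → a n < a (n + 1))
    (hdvd : ∀ n : ℕ, 1 ≤ n → a n ∣ a (n + 1))
    (ρ : ℝ) (hρ : ρ = ∑' n : ℕ, (1 : ℝ) / a (n + 1))
    (A : ℕ → Set ℕ)
    (hA0 : A 0 = {j | ∃ k : ℕ, j = k * a 1})
    (hAeq : ∀ n : ℕ, 0 < n → ∀ m : ℕ, m < n → n ∈ A m → A n = A m)
    (hAnew : ∀ n : ℕ, 0 < n → (∀ m : ℕ, m < n → n ∉ A m) →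
      A n = {j | ∃ k : ℕ, j = n + k * a (n + 1)}) :
    ∀ N : ℕ, 1 ≤ N →
      ((((Finset.Icc 1 N).filter (fun k => k ≠ sInf (A k))).card : ℝ)) < N * ρ := by
  intro N hN
  have hsucc : ∀ n, 1 ≤ n + 1 := fun n => Nat.le_add_left 1 n
  have hsummable : Summable fun n => (1 : ℝ) / a (n + 1) :=
    summable_one_div_of_two_pow_le <|
      two_pow_le_of_dvd_of_lt (hpos 1 le_rfl) (fun n => hdvd _ (hsucc n)) fun n => hmono _ (hsucc n)
  have hpartial : ∑ i ∈ range N, (1 : ℝ) / a (i + 1) < ρ :=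
    hρ ▸ sum_range_lt_tsum_of_pos hsummable (fun n => by have := hpos _ (hsucc n); positivity) N
  calc _ ≤ ∑ i ∈ range N, (N : ℝ) / a (i + 1) :=
        card_filter_ne_le_sum (d := fun i => a (i + 1))
          (exists_eq_sInf_add_mul a A hA0 hAeq hAnew) N
    _ = N * ∑ i ∈ range N, (1 : ℝ) / a (i + 1) := by
        rw [mul_sum]; simp only [mul_one_div]
    _ < N * ρ := mul_lt_mul_of_pos_left hpartial (mod_cast hN)

/-- With `(a_n)_{n≥1}` increasing positive integers, `a_n ∣ a_{n+1}`,
`ρ = Σ_{n≥1} 1/a_n ≤ 1/4`, and the sets `A : ℕ → Set ℕ` of the non-regular Toeplitz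
construction (`A 0 = {k·a₁}`; for `n > 0`, `A n = A m` if `m < n` and `n ∈ A m`, else
`A n = {n + k·a_{n+1}}`), call `n` an initial if `n = min A_n`. Then for every `N ≥ 1`
the number of non-initials in `{1, …, N}` is strictly less than `N·ρ`. -/
theorem count_non_initials_lt
    (a : ℕ → ℕ)
    (hpos : ∀ n : ℕ, 1 ≤ n → 0 < a n)
    (hmono : ∀ n : ℕ, 1 ≤ n → a n < a (n + 1))
    (hdvd : ∀ n : ℕ, 1 ≤ n → a n ∣ a (n + 1))
    (ρ : ℝ) (hρ : ρ = ∑' n : ℕ, (1 : ℝ) / a (n + 1)) (hρ4 : ρ ≤ 1 / 4)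
    (A : ℕ → Set ℕ)
    (hA0 : A 0 = {j | ∃ k : ℕ, j = k * a 1})
    (hAeq : ∀ n : ℕ, 0 < n → ∀ m : ℕ, m < n → n ∈ A m → A n = A m)
    (hAnew : ∀ n : ℕ, 0 < n → (∀ m : ℕ, m < n → n ∉ A m) →
      A n = {j | ∃ k : ℕ, j = n + k * a (n + 1)}) :
    ∀ N : ℕ, 1 ≤ N →
      ((((Finset.Icc 1 N).filter (fun k => k ≠ sInf (A k))).card : ℝ)) < N * ρ :=
  count_non_initials_lt_general a hpos hmono hdvd ρ hρ A hA0 hAeq hAnew
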